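/- arXiv:1709.06487 — 2 statements merged into one kernel-verified Lean document; each statement's English description precedes it below -/
import Mathlib

section
/- For every γ with 0 < γ < 1/L, the set of global minimizers of φ coincides with the set of global minimizers of φ_γ, i.e., argmin_{u ∈ E} φ(u) = argmin_{u ∈ E} φ_γ(u) (Proposition 1(iv), argmin part). -/
open scoped RealInnerProductSpace
open Filter Topology Asymptotics

/-- Moreau envelope `g^γ(v) = inf_w { g(w) + (1/(2γ))‖w − v‖² }` of an
extended-real-valued function `g`. -/
noncomputable def moreauEnv {E : Type*} [NormedAddCommGroup E] [InnerProductSpace ℝ E]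
    (g : E → EReal) (γ : ℝ) (v : E) : EReal :=
  ⨅ w : E, g w + (((1 / (2 * γ)) * ‖w - v‖ ^ 2 : ℝ) : EReal)

/-- The (set-valued) proximal mapping
`prox_{γg}(v) = argmin_w { g(w) + (1/(2γ))‖w − v‖² }`. -/
def proxSet {E : Type*} [NormedAddCommGroup E] [InnerProductSpace ℝ E]
    (g : E → EReal) (γ : ℝ) (v : E) : Set E :=
  {w | ∀ w' : E, g w + (((1 / (2 * γ)) * ‖w - v‖ ^ 2 : ℝ) : EReal)
      ≤ g w' + (((1 / (2 * γ)) * ‖w' - v‖ ^ 2 : ℝ) : EReal)}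

/-- The forward–backward envelope
`φ_γ(u) = ℓ(u) − (γ/2)‖∇ℓ(u)‖² + g^γ(u − γ∇ℓ(u))`, where `l'` plays the role
of the gradient `∇ℓ`. -/
noncomputable def fbe {E : Type*} [NormedAddCommGroup E] [InnerProductSpace ℝ E]
    (l : E → ℝ) (l' : E → E) (g : E → EReal) (γ : ℝ) (u : E) : EReal :=
  ((l u - (γ / 2) * ‖l' u‖ ^ 2 : ℝ) : EReal) + moreauEnv g γ (u - γ • l' u)

/-!
Write `φ_γ(u) = inf_w {q_u(w) + g(w)}` with the quadratic model
`q_u(w) = ℓ(u) + ⟪∇ℓ(u), w - u⟫ + ‖w - u‖² / (2γ)`. Taking `w = u` gives `φ_γ ≤ φ`, and the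
descent lemma gives `q_u(w) ≥ ℓ(w) + c‖w - u‖²` with `c = 1/(2γ) - L/2 > 0`, so `inf φ ≤ φ_γ ≤ φ`;
hence minimisers of `φ` minimise `φ_γ`. Conversely, if `u` minimises `φ_γ`, then
`q_u(w) + g(w) ≥ φ_γ(w) + c‖w - u‖² ≥ φ_γ(u) + c‖w - u‖²`, so every minimising sequence of
`q_u + g` converges to `u`, and lower semicontinuity yields `φ(u) = q_u(u) + g(u) ≤ φ_γ(u)`.
-/

theorem EReal.coe_add_iInf {ι : Sort*} (r : ℝ) (f : ι → EReal) :
    (r : EReal) + ⨅ i, f i = ⨅ i, (r : EReal) + f i :=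
  Monotone.map_iInf_of_continuousAt (f := fun x : EReal ↦ (r : EReal) + x)
    ((EReal.continuousAt_add (p := ((r : EReal), ⨅ i, f i)) (by simp) (by simp)).comp
      (continuousAt_const.prodMk continuousAt_id))
    (fun _ _ h ↦ add_le_add le_rfl h) (EReal.coe_add_top r)

theorem LowerSemicontinuous.le_iInf_of_sq_dist_growth {α : Type*} [PseudoMetricSpace α]
    {h : α → EReal} (hh : LowerSemicontinuous h) {c : ℝ} (hc : 0 < c) {u : α}
    (hbot : ⨅ w, h w ≠ ⊥) (hgrowth : ∀ w, (⨅ w, h w) + ((c * dist w u ^ 2 : ℝ) : EReal) ≤ h w) :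
    h u ≤ ⨅ w, h w := by
  by_contra! hlt
  obtain ⟨r, hr⟩ : ∃ r : ℝ, ⨅ w, h w = r := ⟨_, (EReal.coe_toReal hlt.ne_top hbot).symm⟩
  rw [hr] at hlt hgrowth
  obtain ⟨s, hrs, hsu⟩ := EReal.exists_between_coe_real hlt
  obtain ⟨δ, hδ, hnear⟩ := Metric.eventually_nhds_iff.1 (hh u s hsu)
  have hrs : r < s := EReal.coe_lt_coe_iff.1 hrs
  -- a point with `h w < r + ε` lies within `δ` of `u`, where `h w > s ≥ r + ε`
  set ε := min (c * δ ^ 2) (s - r)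
  have hε : 0 < ε := lt_min (by positivity) (sub_pos.2 hrs)
  obtain ⟨w, hw⟩ := iInf_lt_iff.1 (hr ▸ (EReal.coe_lt_coe_iff.2 (lt_add_of_pos_right r hε)))
  have hclose : c * dist w u ^ 2 < ε := by
    have := (hgrowth w).trans_lt hw
    rw [← EReal.coe_add, EReal.coe_lt_coe_iff] at this
    linarith
  have hdist : dist w u < δ := by
    have : dist w u ^ 2 < δ ^ 2 := lt_of_mul_lt_mul_left (hclose.trans_le (min_le_left _ _)) hc.le
    exact lt_of_pow_lt_pow_left₀ 2 hδ.le this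
  have hsw : (s : EReal) < r + ε := (hnear hdist).trans hw
  rw [← EReal.coe_add, EReal.coe_lt_coe_iff] at hsw
  linarith [min_le_right (c * δ ^ 2) (s - r)]

section Envelope

variable {E : Type*} [NormedAddCommGroup E] [InnerProductSpace ℝ E]

theorem HasGradientAt.hasDerivAt_comp_add_smul [CompleteSpace E] {l : E → ℝ} {u d g : E} {t : ℝ}
    (hl : HasGradientAt l g (u + t • d)) :
    HasDerivAt (fun t : ℝ ↦ l (u + t • d)) ⟪g, d⟫ t := by
  have hline : HasDerivAt (fun t : ℝ ↦ u + t • d) d t := by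
    simpa using ((hasDerivAt_id t).smul_const d).const_add u
  simpa [Function.comp_def, InnerProductSpace.toDual_apply_apply] using
    hl.hasFDerivAt.comp_hasDerivAt t hline

theorem le_add_inner_add_of_lipschitz_gradient [CompleteSpace E] {l : E → ℝ} {l' : E → E}
    {L : ℝ} (hgrad : ∀ x, HasGradientAt l (l' x) x)
    (hlip : ∀ x y, ‖l' x - l' y‖ ≤ L * ‖x - y‖) (u w : E) :
    l w ≤ l u + ⟪l' u, w - u⟫ + L / 2 * ‖w - u‖ ^ 2 := by
  set d := w - u
  -- `H' t = ⟪l' (u + t • d) - l' u, d⟫ - L t ‖d‖² ≤ 0` by Cauchy–Schwarz and the Lipschitz bound.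
  let H : ℝ → ℝ := fun t ↦ l (u + t • d) - t * ⟪l' u, d⟫ - L / 2 * ‖d‖ ^ 2 * t ^ 2
  have hH : ∀ t, HasDerivAt H (⟪l' (u + t • d), d⟫ - ⟪l' u, d⟫ - L / 2 * ‖d‖ ^ 2 * (2 * t)) t :=
    fun t ↦ ((((hgrad _).hasDerivAt_comp_add_smul).sub ((hasDerivAt_id t).mul_const _)).sub
      ((hasDerivAt_pow 2 t).const_mul (L / 2 * ‖d‖ ^ 2))).congr_deriv (by simp)
  have hanti : AntitoneOn H (Set.Icc 0 1) := by
    refine antitoneOn_of_deriv_nonpos (convex_Icc 0 1)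
      (fun t _ ↦ (hH t).continuousAt.continuousWithinAt)
      (fun t _ ↦ (hH t).differentiableAt.differentiableWithinAt) fun t ht ↦ ?_
    rw [interior_Icc] at ht
    have hlip_t : ‖l' (u + t • d) - l' u‖ ≤ L * (t * ‖d‖) := by
      simpa [norm_smul, abs_of_pos ht.1] using hlip (u + t • d) u
    have hcs : ⟪l' (u + t • d) - l' u, d⟫ ≤ ‖l' (u + t • d) - l' u‖ * ‖d‖ :=
      real_inner_le_norm _ _
    rw [(hH t).deriv, ← inner_sub_left]
    nlinarith [norm_nonneg d]
  have h01 := hanti (by norm_num) (by norm_num) zero_le_one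
  simp only [H, d] at h01
  norm_num at h01
  linarith

noncomputable def fbeModel (l : E → ℝ) (l' : E → E) (γ : ℝ) (u w : E) : ℝ :=
  l u + ⟪l' u, w - u⟫ + 1 / (2 * γ) * ‖w - u‖ ^ 2

variable {l : E → ℝ} {l' : E → E} {g : E → EReal} {γ L : ℝ}

theorem fbeModel_self (u : E) : fbeModel l l' γ u u = l u := by
  simp [fbeModel]

theorem continuous_fbeModel (u : E) : Continuous (fbeModel l l' γ u) := by
  unfold fbeModel
  fun_prop

theorem fbe_eq_iInf (hγ : γ ≠ 0) (u : E) :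
    fbe l l' g γ u = ⨅ w, (fbeModel l l' γ u w : EReal) + g w := by
  rw [fbe, moreauEnv, EReal.coe_add_iInf]
  refine iInf_congr fun w ↦ ?_
  have hmodel : l u - γ / 2 * ‖l' u‖ ^ 2 + 1 / (2 * γ) * ‖w - (u - γ • l' u)‖ ^ 2
      = fbeModel l l' γ u w := by
    rw [fbeModel, show w - (u - γ • l' u) = (w - u) + γ • l' u by abel, norm_add_sq_real,
      real_inner_smul_right, norm_smul, Real.norm_eq_abs, mul_pow, sq_abs, real_inner_comm]
    field_simp
    ring
  rw [← hmodel, EReal.coe_add, add_comm (g w), add_assoc]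

theorem fbe_le_cost (hγ : γ ≠ 0) (u : E) : fbe l l' g γ u ≤ (l u : EReal) + g u := by
  rw [fbe_eq_iInf hγ]
  exact iInf_le_of_le u (by rw [fbeModel_self])

theorem fbe_ne_bot (hγ : 0 ≤ γ) {m : ℝ} (hm : ∀ x, (m : EReal) ≤ g x) (u : E) :
    fbe l l' g γ u ≠ ⊥ := by
  have hmoreau : (m : EReal) ≤ moreauEnv g γ (u - γ • l' u) :=
    le_iInf fun w ↦ le_add_of_le_of_nonneg (hm w) (EReal.coe_nonneg.2 (by positivity))
  refine ne_bot_of_le_ne_bot ?_ (add_le_add le_rfl hmoreau)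
  rw [← EReal.coe_add]
  exact EReal.coe_ne_bot _

theorem cost_add_le_fbeModel_add [CompleteSpace E] (hgrad : ∀ x, HasGradientAt l (l' x) x)
    (hlip : ∀ x y, ‖l' x - l' y‖ ≤ L * ‖x - y‖) (u w : E) :
    (((1 / (2 * γ) - L / 2) * ‖w - u‖ ^ 2 : ℝ) : EReal) + ((l w : EReal) + g w)
      ≤ (fbeModel l l' γ u w : EReal) + g w := by
  have hdesc := le_add_inner_add_of_lipschitz_gradient hgrad hlip u w
  rw [← add_assoc, ← EReal.coe_add]
  gcongr
  rw [fbeModel]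
  linarith

theorem one_div_two_mul_sub_div_two_pos (hγ : 0 < γ) (hγL : γ * L < 1) :
    0 < 1 / (2 * γ) - L / 2 := by
  rw [div_sub_div _ _ (by positivity) two_ne_zero]
  exact div_pos (by nlinarith) (by positivity)

theorem iInf_cost_le_fbe [CompleteSpace E] (hγ : 0 < γ) (hγL : γ * L < 1)
    (hgrad : ∀ x, HasGradientAt l (l' x) x) (hlip : ∀ x y, ‖l' x - l' y‖ ≤ L * ‖x - y‖) (u : E) :
    ⨅ w, (l w : EReal) + g w ≤ fbe l l' g γ u := by
  rw [fbe_eq_iInf hγ.ne']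
  refine le_iInf fun w ↦ (iInf_le _ w).trans ?_
  refine le_trans (le_add_of_nonneg_left ?_) (cost_add_le_fbeModel_add hgrad hlip u w)
  exact EReal.coe_nonneg.2 (mul_nonneg (one_div_two_mul_sub_div_two_pos hγ hγL).le (sq_nonneg _))

theorem cost_le_fbe_of_forall_fbe_le [CompleteSpace E] (hγ : 0 < γ) (hγL : γ * L < 1)
    (hgrad : ∀ x, HasGradientAt l (l' x) x) (hlip : ∀ x y, ‖l' x - l' y‖ ≤ L * ‖x - y‖)
    (hlsc : LowerSemicontinuous g) (hbdd : ∃ m : ℝ, ∀ x, (m : EReal) ≤ g x) {u : E}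
    (hu : ∀ v, fbe l l' g γ u ≤ fbe l l' g γ v) :
    (l u : EReal) + g u ≤ fbe l l' g γ u := by
  obtain ⟨m, hm⟩ := hbdd
  have hfbe := fbe_eq_iInf (l := l) (l' := l') (g := g) hγ.ne' u
  have hlsc_model : LowerSemicontinuous fun w ↦ (fbeModel l l' γ u w : EReal) + g w :=
    (continuous_coe_real_ereal.comp (continuous_fbeModel u)).lowerSemicontinuous.add'
      hlsc fun w ↦ EReal.continuousAt_add (by simp) (by simp)
  have hmin := hlsc_model.le_iInf_of_sq_dist_growth (one_div_two_mul_sub_div_two_pos hγ hγL)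
    (hfbe ▸ fbe_ne_bot hγ.le hm u) fun w ↦ by
      rw [← hfbe, dist_eq_norm, add_comm]
      exact (add_le_add le_rfl ((hu w).trans (fbe_le_cost hγ.ne' w))).trans
        (cost_add_le_fbeModel_add hgrad hlip u w)
  rwa [← hfbe, fbeModel_self] at hmin

end Envelope

theorem argmin_cost_eq_argmin_fbe_general
    {E : Type*} [NormedAddCommGroup E] [InnerProductSpace ℝ E] [FiniteDimensional ℝ E]
    (l : E → ℝ) (l' : E → E) (g : E → EReal) (L γ : ℝ)
    (hL : 0 < L) (hγ : 0 < γ)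
    (hgrad : ∀ x : E, HasGradientAt l (l' x) x)
    (hlip : ∀ x y : E, ‖l' x - l' y‖ ≤ L * ‖x - y‖)
    (hlsc : LowerSemicontinuous g)
    (hbdd : ∃ m : ℝ, ∀ x : E, (m : EReal) ≤ g x)
    (hγL : γ < 1 / L) :
    {u : E | ∀ v : E, (l u : EReal) + g u ≤ (l v : EReal) + g v} =
      {u : E | ∀ v : E, fbe l l' g γ u ≤ fbe l l' g γ v} := by
  have hγL' : γ * L < 1 := (lt_div_iff₀ hL).1 hγL
  ext u
  constructor
  · intro hu v
    calc fbe l l' g γ u ≤ (l u : EReal) + g u := fbe_le_cost hγ.ne' u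
      _ ≤ ⨅ w, (l w : EReal) + g w := le_iInf hu
      _ ≤ fbe l l' g γ v := iInf_cost_le_fbe hγ hγL' hgrad hlip v
  · intro hu v
    calc (l u : EReal) + g u ≤ fbe l l' g γ u :=
          cost_le_fbe_of_forall_fbe_le hγ hγL' hgrad hlip hlsc hbdd hu
      _ ≤ fbe l l' g γ v := hu v
      _ ≤ (l v : EReal) + g v := fbe_le_cost hγ.ne' v

/-- for `0 < γ < 1/L`, `argmin φ = argmin φ_γ`. -/
theorem argmin_cost_eq_argmin_fbe
    {E : Type*} [NormedAddCommGroup E] [InnerProductSpace ℝ E] [FiniteDimensional ℝ E]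
    (l : E → ℝ) (l' : E → E) (g : E → EReal) (L γ : ℝ)
    (hL : 0 < L) (hγ : 0 < γ)
    (hgrad : ∀ x : E, HasGradientAt l (l' x) x)
    (hlip : ∀ x y : E, ‖l' x - l' y‖ ≤ L * ‖x - y‖)
    (hproper : ∃ x : E, g x ≠ ⊤) (hbot : ∀ x : E, g x ≠ ⊥)
    (hlsc : LowerSemicontinuous g)
    (hbdd : ∃ m : ℝ, ∀ x : E, (m : EReal) ≤ g x)
    (hγL : γ < 1 / L) :
    {u : E | ∀ v : E, (l u : EReal) + g u ≤ (l v : EReal) + g v} =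
      {u : E | ∀ v : E, fbe l l' g γ u ≤ fbe l l' g γ v} :=
  argmin_cost_eq_argmin_fbe_general l l' g L γ hL hγ hgrad hlip hlsc hbdd hγL
end

section
/- Global subsequential convergence of PANOC: let 0 < γ < 1/L, σ > 0, and assume φ = ℓ + g is bounded below. Let (u^k) and (ū^k) be sequences in E with ū^k ∈ T_γ(u^k) for every k, set r^k := (u^k − ū^k)/γ, and suppose the sufficient-decrease condition φ_γ(u^{k+1}) ≤ φ_γ(u^k) − σ‖r^k‖² holds for every k. Then: (a) Σ_{k} ‖r^k‖² < ∞, hence r^k → 0; (b) a point u' ∈ E is a cluster point of (u^k) if and only if it is a cluster point of (ū^k); (c) every cluster point u' of (u^k) satisfies the γ-criticality condition u' ∈ T_γ(u'), i.e., u' ∈ prox_{γg}(u' − γ∇ℓ(u')). -/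
open scoped RealInnerProductSpace
open Filter Topology Asymptotics

/-! The envelope evaluated with a forward–backward point `w ∈ T_γ(u)` equals
`ℓ(u) + ⟪∇ℓ(u), w - u⟫ + ‖w - u‖² / (2γ) + g(w)`, which by the descent lemma dominates `φ(w)`
as soon as `γL ≤ 1`. Hence `φ_γ(u^k) ≥ inf φ`, and telescoping the sufficient decrease bounds
`σ ∑ ‖r^k‖²` by `φ_γ(u^0) - inf φ`. Then `u^k - ū^k = γ r^k → 0`, so the two sequences have the
same cluster points, and criticality passes to the limit because the graph of `prox_{γg}` is
closed when `g` is lower semicontinuous. -/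

theorem le_add_inner_add_half_mul_sq_of_lipschitz_gradient {E : Type*} [NormedAddCommGroup E]
    [InnerProductSpace ℝ E] [CompleteSpace E] {l : E → ℝ} {l' : E → E} {L : ℝ}
    (hgrad : ∀ x, HasGradientAt l (l' x) x) (hlip : ∀ x y, ‖l' x - l' y‖ ≤ L * ‖x - y‖)
    (x y : E) : l y ≤ l x + ⟪l' x, y - x⟫ + L / 2 * ‖y - x‖ ^ 2 := by
  set d := y - x
  let h : ℝ → ℝ := fun t => l (x + t • d) - t * ⟪l' x, d⟫ - t ^ 2 * (L / 2 * ‖d‖ ^ 2)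
  have hderiv : ∀ t, HasDerivAt h (⟪l' (x + t • d) - l' x, d⟫ - t * (L * ‖d‖ ^ 2)) t := by
    intro t
    have hline : HasDerivAt (fun s : ℝ => x + s • d) d t := by
      simpa using ((hasDerivAt_id t).smul_const d).const_add x
    have hl : HasDerivAt (fun s : ℝ => l (x + s • d)) ⟪l' (x + t • d), d⟫ t := by
      exact (hgrad (x + t • d)).hasFDerivAt.comp_hasDerivAt t hline
    refine ((hl.sub ((hasDerivAt_id t).mul_const ⟪l' x, d⟫)).sub
      ((hasDerivAt_pow 2 t).mul_const (L / 2 * ‖d‖ ^ 2))).congr_deriv ?_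
    simp only [inner_sub_left, one_mul, Nat.cast_ofNat]
    ring
  have hslope : ∀ t ∈ Set.Ioo (0 : ℝ) 1,
      ⟪l' (x + t • d) - l' x, d⟫ - t * (L * ‖d‖ ^ 2) ≤ 0 := by
    rintro t ⟨ht, -⟩
    rw [sub_nonpos]
    calc ⟪l' (x + t • d) - l' x, d⟫ ≤ ‖l' (x + t • d) - l' x‖ * ‖d‖ := real_inner_le_norm _ _
      _ ≤ L * ‖t • d‖ * ‖d‖ := by gcongr; simpa using hlip (x + t • d) x
      _ = t * (L * ‖d‖ ^ 2) := by rw [norm_smul, Real.norm_of_nonneg ht.le]; ring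
  have hmono : h 1 ≤ h 0 :=
    antitoneOn_of_hasDerivWithinAt_nonpos (convex_Icc 0 1)
      (fun t _ => (hderiv t).continuousAt.continuousWithinAt)
      (fun t _ => (hderiv t).hasDerivWithinAt) (by simpa only [interior_Icc] using hslope)
      (by simp) (by simp) zero_le_one
  norm_num [h, d] at hmono
  linarith

theorem EReal.continuousAt_add_coe (x : EReal) (t : ℝ) :
    ContinuousAt (fun p : EReal × EReal => p.1 + p.2) (x, t) :=
  EReal.continuousAt_add (Or.inr (EReal.coe_ne_bot t)) (Or.inr (EReal.coe_ne_top t))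

theorem LowerSemicontinuousAt.le_of_tendsto_of_eventually_le {α β ι : Type*}
    [TopologicalSpace α] [LinearOrder β] [TopologicalSpace β] [OrderTopology β]
    [DenselyOrdered β] {f : α → β} {x : α} {F : Filter ι} [F.NeBot] {a : ι → α} {b : ι → β}
    {B : β} (hf : LowerSemicontinuousAt f x) (ha : Tendsto a F (𝓝 x)) (hb : Tendsto b F (𝓝 B))
    (hab : ∀ᶠ i in F, f (a i) ≤ b i) : f x ≤ B :=
  le_of_forall_lt_imp_le_of_dense fun y hy =>
    ge_of_tendsto hb ((ha.eventually (hf y hy)).and hab |>.mono fun _ hi => hi.1.le.trans hi.2)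

theorem summable_of_sufficient_decrease {F : ℕ → EReal} {a : ℕ → ℝ} {m : ℝ}
    (ha : ∀ k, 0 ≤ a k) (hdec : ∀ k, F (k + 1) ≤ F k - a k) (hm : ∀ k, (m : EReal) ≤ F k)
    (h0 : F 0 ≠ ⊤) : Summable a := by
  have htelescope : ∀ n, F n + (∑ k ∈ Finset.range n, a k : ℝ) ≤ F 0 := by
    intro n
    induction n with
    | zero => simp
    | succ n ih =>
      calc F (n + 1) + (∑ k ∈ Finset.range (n + 1), a k : ℝ)
          = F (n + 1) + a n + (∑ k ∈ Finset.range n, a k : ℝ) := by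
            rw [Finset.sum_range_succ, EReal.coe_add]; ac_rfl
        _ ≤ F n - a n + a n + (∑ k ∈ Finset.range n, a k : ℝ) := by gcongr; exact hdec n
        _ ≤ F 0 := by rw [EReal.sub_add_cancel]; exact ih
  have hF0 : F 0 = ((F 0).toReal : EReal) :=
    (EReal.coe_toReal h0 (ne_bot_of_le_ne_bot (EReal.coe_ne_bot m) (hm 0))).symm
  refine summable_of_sum_range_le ha (c := (F 0).toReal - m) fun n => ?_
  have := (add_le_add_left (hm n) _).trans (htelescope n)
  rw [hF0, ← EReal.coe_add, EReal.coe_le_coe_iff] at this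
  linarith

theorem MapClusterPt.of_tendsto_dist {X ι : Type*} [PseudoMetricSpace X] {F : Filter ι}
    {a b : ι → X} {x : X} (h : MapClusterPt x F a)
    (hab : Tendsto (fun i => dist (a i) (b i)) F (𝓝 0)) : MapClusterPt x F b := by
  rw [Metric.nhds_basis_ball.mapClusterPt_iff_frequently] at h ⊢
  intro ε hε
  have hclose : ∀ᶠ i in F, dist (a i) (b i) < ε / 2 := (tendsto_order.1 hab).2 _ (half_pos hε)
  refine ((h _ (half_pos hε)).and_eventually hclose).mono fun i ⟨hai, hab⟩ => ?_
  rw [Metric.mem_ball] at hai ⊢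
  calc dist (b i) x ≤ dist (a i) (b i) + dist (a i) x := dist_triangle_left _ _ _
    _ < ε := by linarith

section Prox

variable {E : Type*} [NormedAddCommGroup E] [InnerProductSpace ℝ E] {g : E → EReal} {γ : ℝ}

theorem moreauEnv_eq_of_mem_proxSet {v w : E} (hw : w ∈ proxSet g γ v) :
    moreauEnv g γ v = g w + ((1 / (2 * γ) * ‖w - v‖ ^ 2 : ℝ) : EReal) :=
  le_antisymm (iInf_le _ w) (le_iInf hw)

theorem ne_top_of_mem_proxSet (hproper : ∃ x, g x ≠ ⊤) {v w : E} (hw : w ∈ proxSet g γ v) :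
    g w ≠ ⊤ := by
  obtain ⟨x, hx⟩ := hproper
  intro htop
  have := hw x
  rw [htop, EReal.top_add_coe, top_le_iff] at this
  exact EReal.add_ne_top hx (EReal.coe_ne_top _) this

theorem mem_proxSet_of_tendsto {ι : Type*} {F : Filter ι} [F.NeBot] (hg : LowerSemicontinuous g)
    {v w : ι → E} {v₀ w₀ : E} (hv : Tendsto v F (𝓝 v₀)) (hw : Tendsto w F (𝓝 w₀))
    (hmem : ∀ᶠ i in F, w i ∈ proxSet g γ (v i)) : w₀ ∈ proxSet g γ v₀ := by
  intro w'
  have hlsc : LowerSemicontinuousAt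
      (fun p : E × E => g p.1 + ((1 / (2 * γ) * ‖p.1 - p.2‖ ^ 2 : ℝ) : EReal)) (w₀, v₀) :=
    LowerSemicontinuousAt.add' (hg.comp continuous_fst (w₀, v₀))
      (continuous_coe_real_ereal.comp (by fun_prop)).continuousAt.lowerSemicontinuousAt
      (EReal.continuousAt_add_coe _ _)
  have hrhs : Tendsto (fun i => g w' + ((1 / (2 * γ) * ‖w' - v i‖ ^ 2 : ℝ) : EReal)) F
      (𝓝 (g w' + ((1 / (2 * γ) * ‖w' - v₀‖ ^ 2 : ℝ) : EReal))) :=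
    (EReal.continuousAt_add_coe _ _).tendsto.comp (tendsto_const_nhds.prodMk_nhds
      (continuous_coe_real_ereal.continuousAt.tendsto.comp
        (((tendsto_const_nhds.sub hv).norm.pow 2).const_mul _)))
  exact hlsc.le_of_tendsto_of_eventually_le (hw.prodMk_nhds hv) hrhs (hmem.mono fun i hi => hi w')

variable {l : E → ℝ} {l' : E → E}

theorem fbe_eq_of_mem_proxSet (hγ : γ ≠ 0) {u w : E} (hw : w ∈ proxSet g γ (u - γ • l' u)) :
    fbe l l' g γ u = ((l u + ⟪l' u, w - u⟫ + 1 / (2 * γ) * ‖w - u‖ ^ 2 : ℝ) : EReal) + g w := by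
  rw [fbe, moreauEnv_eq_of_mem_proxSet hw, add_left_comm, ← EReal.coe_add, add_comm]
  congr 2
  rw [show w - (u - γ • l' u) = (w - u) + γ • l' u by abel, norm_add_sq_real, norm_smul,
    real_inner_smul_right, real_inner_comm, Real.norm_eq_abs, mul_pow, sq_abs]
  field_simp
  ring

theorem add_le_fbe_of_mem_proxSet [CompleteSpace E] {L : ℝ}
    (hgrad : ∀ x, HasGradientAt l (l' x) x) (hlip : ∀ x y, ‖l' x - l' y‖ ≤ L * ‖x - y‖)
    (hγ : 0 < γ) (hγL : γ * L ≤ 1) {u w : E} (hw : w ∈ proxSet g γ (u - γ • l' u)) :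
    (l w : EReal) + g w ≤ fbe l l' g γ u := by
  rw [fbe_eq_of_mem_proxSet hγ.ne' hw]
  gcongr
  have hcoef : L / 2 ≤ 1 / (2 * γ) := by
    rw [div_le_div_iff₀ two_pos (by positivity)]
    linarith
  calc l w ≤ l u + ⟪l' u, w - u⟫ + L / 2 * ‖w - u‖ ^ 2 :=
        le_add_inner_add_half_mul_sq_of_lipschitz_gradient hgrad hlip u w
    _ ≤ l u + ⟪l' u, w - u⟫ + 1 / (2 * γ) * ‖w - u‖ ^ 2 := by gcongr

end Prox

theorem panoc_global_subsequential_convergence_general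
    {E : Type*} [NormedAddCommGroup E] [InnerProductSpace ℝ E] [FiniteDimensional ℝ E]
    (l : E → ℝ) (l' : E → E) (g : E → EReal) (L γ : ℝ)
    (hγ : 0 < γ)
    (hgrad : ∀ x : E, HasGradientAt l (l' x) x)
    (hlip : ∀ x y : E, ‖l' x - l' y‖ ≤ L * ‖x - y‖)
    (hproper : ∃ x : E, g x ≠ ⊤)
    (hlsc : LowerSemicontinuous g)
    (hγL : γ < 1 / L) (σ : ℝ) (hσ : 0 < σ)
    (hφbdd : ∃ m : ℝ, ∀ x : E, (m : EReal) ≤ (l x : EReal) + g x)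
    (u ub r : ℕ → E)
    (hub : ∀ k, ub k ∈ proxSet g γ (u k - γ • l' (u k)))
    (hr : ∀ k, r k = (1 / γ) • (u k - ub k))
    (hdec : ∀ k, fbe l l' g γ (u (k + 1)) ≤
        fbe l l' g γ (u k) - ((σ * ‖r k‖ ^ 2 : ℝ) : EReal)) :
    (Summable fun k => ‖r k‖ ^ 2) ∧
    Tendsto r atTop (𝓝 0) ∧
    (∀ u' : E, MapClusterPt u' atTop u ↔ MapClusterPt u' atTop ub) ∧
    (∀ u' : E, MapClusterPt u' atTop u → u' ∈ proxSet g γ (u' - γ • l' u')) := by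
  have hγL_le : γ * L ≤ 1 := ((lt_div_iff₀ (one_div_pos.mp (hγ.trans hγL))).mp hγL).le
  obtain ⟨m, hm⟩ := hφbdd
  have hsummable : Summable fun k => ‖r k‖ ^ 2 := by
    refine (summable_mul_left_iff hσ.ne').mp (summable_of_sufficient_decrease
      (fun k => by positivity) hdec
      (fun k => (hm _).trans (add_le_fbe_of_mem_proxSet hgrad hlip hγ hγL_le (hub k))) ?_)
    rw [fbe_eq_of_mem_proxSet hγ.ne' (hub 0)]
    exact EReal.add_ne_top (EReal.coe_ne_top _) (ne_top_of_mem_proxSet hproper (hub 0))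
  have hr0 : Tendsto r atTop (𝓝 0) :=
    tendsto_zero_iff_norm_tendsto_zero.mpr (by simpa using hsummable.tendsto_atTop_zero.sqrt)
  have hgap : ∀ k, u k - ub k = γ • r k := fun k => by
    rw [hr k, smul_smul, mul_one_div_cancel hγ.ne', one_smul]
  have hdist : Tendsto (fun k => dist (u k) (ub k)) atTop (𝓝 0) := by
    simpa [dist_eq_norm, hgap] using (hr0.const_smul γ).norm
  refine ⟨hsummable, hr0, fun u' => ⟨fun h => h.of_tendsto_dist hdist,
    fun h => h.of_tendsto_dist (by simpa only [dist_comm] using hdist)⟩, fun u' hu' => ?_⟩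
  obtain ⟨ψ, hψ, hψu⟩ := hu'.tendsto_subseq
  have hl' : Continuous l' :=
    (LipschitzWith.of_dist_le' (by simpa only [dist_eq_norm] using hlip)).continuous
  exact mem_proxSet_of_tendsto hlsc (hψu.sub (((hl'.tendsto u').comp hψu).const_smul γ))
    (hψu.congr_dist (hdist.comp hψ.tendsto_atTop)) (Eventually.of_forall fun n => hub (ψ n))

/-- global subsequential convergence of PANOC: square-summability
of the residuals, coincidence of cluster points of `(u^k)` and `(ū^k)`, and
γ-criticality of every cluster point. -/
theorem panoc_global_subsequential_convergence
    {E : Type*} [NormedAddCommGroup E] [InnerProductSpace ℝ E] [FiniteDimensional ℝ E]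
    (l : E → ℝ) (l' : E → E) (g : E → EReal) (L γ : ℝ)
    (hL : 0 < L) (hγ : 0 < γ)
    (hgrad : ∀ x : E, HasGradientAt l (l' x) x)
    (hlip : ∀ x y : E, ‖l' x - l' y‖ ≤ L * ‖x - y‖)
    (hproper : ∃ x : E, g x ≠ ⊤) (hbot : ∀ x : E, g x ≠ ⊥)
    (hlsc : LowerSemicontinuous g)
    (hbdd : ∃ m : ℝ, ∀ x : E, (m : EReal) ≤ g x)
    (hγL : γ < 1 / L) (σ : ℝ) (hσ : 0 < σ)
    (hφbdd : ∃ m : ℝ, ∀ x : E, (m : EReal) ≤ (l x : EReal) + g x)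
    (u ub r : ℕ → E)
    (hub : ∀ k, ub k ∈ proxSet g γ (u k - γ • l' (u k)))
    (hr : ∀ k, r k = (1 / γ) • (u k - ub k))
    (hdec : ∀ k, fbe l l' g γ (u (k + 1)) ≤
        fbe l l' g γ (u k) - ((σ * ‖r k‖ ^ 2 : ℝ) : EReal)) :
    (Summable fun k => ‖r k‖ ^ 2) ∧
    Tendsto r atTop (𝓝 0) ∧
    (∀ u' : E, MapClusterPt u' atTop u ↔ MapClusterPt u' atTop ub) ∧
    (∀ u' : E, MapClusterPt u' atTop u → u' ∈ proxSet g γ (u' - γ • l' u')) :=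
  panoc_global_subsequential_convergence_general l l' g L γ hγ hgrad hlip hproper hlsc hγL σ hσ
    hφbdd u ub r hub hr hdec
end
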